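/- arXiv:1306.4340 — 5 statements merged into one kernel-verified Lean document; each statement's English description precedes it below -/
import Mathlib

section
/- Let G(z, w) = Σ_{k=0}^{d} G_k(z, w) be a polynomial in two variables over ℂ, where G_k is the homogeneous component of degree k, with G_d ≠ 0 and G_l ≠ 0 for some 0 ≤ l ≤ d - 1. If a ∈ ℂ, a ≠ 0, and G(a·z, conj(a)·w) = λ·G(z, w) for some nonzero scalar λ ∈ ℂ (as polynomials in z, w), then |a| = 1. -/
open MvPolynomial

lemma degree_fin2 (m : Fin 2 →₀ ℕ) : m.degree = m 0 + m 1 := by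
  rw [Finsupp.degree_apply, Finset.sum_subset (Finset.subset_univ m.support)]
  · simp [Fin.sum_univ_two]
  · intro i _ hi; simpa using Finsupp.notMem_support_iff.mp hi

lemma coeff_scaled (a b : ℂ) (G : MvPolynomial (Fin 2) ℂ) (m : Fin 2 →₀ ℕ) :
    coeff m (aeval ![C a * X 0, C b * X 1] G) = coeff m G * a ^ (m 0) * b ^ (m 1) := by
  induction G using MvPolynomial.induction_on' with
  | monomial n c =>
    have key : (aeval ![C a * X 0, C b * X 1] (monomial n c) : MvPolynomial (Fin 2) ℂ)
        = monomial n (c * a ^ n 0 * b ^ n 1) := by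
      rw [aeval_monomial, monomial_eq, algebraMap_eq]
      simp only [Finsupp.prod_pow, Fin.prod_univ_two, Matrix.cons_val_zero, Matrix.cons_val_one,
        Matrix.head_cons, mul_pow, ← C_pow, C_mul]
      ring
    rw [key, coeff_monomial, coeff_monomial]
    split <;> simp_all
  | add p q hp hq => rw [map_add, coeff_add, coeff_add, hp, hq]; ring

lemma pow_eq_one_helper (r : ℝ) (hr : 0 < r) (l d : ℕ) (hl : l < d) (h : r ^ d = r ^ l) :
    r = 1 := by
  rcases lt_trichotomy r 1 with h1 | h1 | h1
  · exact absurd h (ne_of_lt (pow_lt_pow_right_of_lt_one₀ hr h1 hl))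
  · exact h1
  · exact absurd h (ne_of_gt (pow_lt_pow_right₀ h1 hl))

lemma scaling_poly_eq (G : MvPolynomial (Fin 2) ℂ) (a lam : ℂ)
    (h : ∀ z w : ℂ, eval ![a * z, (starRingEnd ℂ) a * w] G = lam * eval ![z, w] G) :
    aeval ![C a * X 0, C ((starRingEnd ℂ) a) * X 1] G = C lam * G := by
  apply MvPolynomial.funext
  intro x
  have hx : x = ![x 0, x 1] := by
    funext i; fin_cases i <;> simp
  rw [hx]
  have := h (x 0) (x 1)
  simp only [aeval_eq_bind₁, eval, eval₂Hom_bind₁]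
  rw [map_mul, eval₂Hom_C]
  have hfun : (fun i => (eval₂Hom (RingHom.id ℂ) ![x 0, x 1])
        (![C a * X 0, C ((starRingEnd ℂ) a) * X 1] i)) = ![a * x 0, (starRingEnd ℂ) a * x 1] := by
    funext i; fin_cases i <;> simp [eval]
  rw [hfun]
  exact this

/-- If `G = Σ_{k=0}^d G_k` with `G_d ≠ 0` and `G_l ≠ 0` for some
`l < d`, and `G(a z, conj a · w) = λ G(z, w)` for some `a ≠ 0`, `λ ≠ 0`, then
`|a| = 1`. -/
theorem abs_eq_one_of_scaling_invariance (G : MvPolynomial (Fin 2) ℂ) (d l : ℕ)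
    (hl : l < d) (hdeg : G.totalDegree ≤ d)
    (hGd : homogeneousComponent d G ≠ 0) (hGl : homogeneousComponent l G ≠ 0)
    (a lam : ℂ) (ha : a ≠ 0) (hlam : lam ≠ 0)
    (h : ∀ z w : ℂ, eval ![a * z, (starRingEnd ℂ) a * w] G = lam * eval ![z, w] G) :
    ‖a‖ = 1 := by
  have hpoly := scaling_poly_eq G a lam h
  have key : ∀ k : ℕ, homogeneousComponent k G ≠ 0 →
      ‖a‖ ^ k = ‖lam‖ := by
    intro k hG
    obtain ⟨m, hm⟩ := MvPolynomial.ne_zero_iff.mp hG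
    rw [coeff_homogeneousComponent] at hm
    by_cases hdk : m.degree = k
    · simp only [hdk, if_true] at hm
      have hc := congrArg (coeff m) hpoly
      rw [coeff_scaled, coeff_C_mul] at hc
      have heq : a ^ m 0 * (starRingEnd ℂ) a ^ m 1 = lam := by
        apply mul_left_cancel₀ hm
        linear_combination hc
      have := congrArg (‖·‖) heq
      rw [norm_mul, norm_pow, norm_pow, Complex.norm_conj, ← pow_add, ← degree_fin2, hdk] at this
      exact this
    · simp [hdk] at hm
  have hd := key d hGd
  have hlk := key l hGl
  exact pow_eq_one_helper _ (norm_pos_iff.mpr ha) l d hl (hd.trans hlk.symm)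
end

section
/- Let z₁, z₂ : ℝ → ℂ be nonconstant polynomials and let φ(t) = (αt + β)/(γt + δ) be a Möbius transformation (αδ - βγ ≠ 0) satisfying z₂(φ(t)) = a·z₁(t) + b for all t ≠ -δ/γ, for some a, b ∈ ℂ with a ≠ 0. Then γ = 0, i.e., φ is linear affine: φ(t) = (α/δ)t + (β/δ). -/
open Filter Topology

/-- If `z₁, z₂` are nonconstant complex polynomials and a Möbius
transformation `φ(t) = (αt + β)/(γt + δ)` (real coefficients, `αδ - βγ ≠ 0`)
satisfies `z₂(φ(t)) = a z₁(t) + b` for all non-pole `t`, with `a ≠ 0`, then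
`γ = 0`, i.e. `φ` is linear affine. -/
theorem moebius_is_affine_for_polynomial_curves
    (z₁ z₂ : Polynomial ℂ) (h₁ : 0 < z₁.natDegree) (h₂ : 0 < z₂.natDegree)
    (α β γ δ : ℝ) (hdet : α * δ - β * γ ≠ 0) (a b : ℂ) (ha : a ≠ 0)
    (h : ∀ t : ℝ, γ * t + δ ≠ 0 →
      z₂.eval ((((α * t + β) / (γ * t + δ) : ℝ)) : ℂ) = a * z₁.eval (t : ℂ) + b) :
    γ = 0 := by
  by_contra hγ
  -- φ(t) → α/γ as t → ∞
  have hφ : Tendsto (fun t : ℝ => (α * t + β) / (γ * t + δ)) atTop (𝓝 (α / γ)) := by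
    have hnum : Tendsto (fun t : ℝ => α + β / t) atTop (𝓝 (α + 0)) :=
      tendsto_const_nhds.add (tendsto_const_div_atTop_nhds_zero_nat β |>.comp tendsto_natCast_atTop_atTop |>.congr' (by
        filter_upwards with n; rfl) |> fun _ => tendsto_const_nhds.div_atTop tendsto_id)
    have hden : Tendsto (fun t : ℝ => γ + δ / t) atTop (𝓝 (γ + 0)) :=
      tendsto_const_nhds.add (tendsto_const_nhds.div_atTop tendsto_id)
    have := (hnum.div hden (by simpa using hγ))
    rw [add_zero, add_zero] at this
    refine this.congr' ?_
    filter_upwards [eventually_gt_atTop 0] with t ht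
    rw [Pi.div_apply]
    field_simp
  -- LHS tends to finite value
  have hL : Tendsto (fun t : ℝ => z₂.eval ((((α * t + β) / (γ * t + δ) : ℝ)) : ℂ))
      atTop (𝓝 (z₂.eval ((α / γ : ℝ) : ℂ))) :=
    (z₂.continuous.tendsto _).comp ((Complex.continuous_ofReal.tendsto _).comp hφ)
  -- RHS norm tends to ∞
  have hz₁ : Tendsto (fun t : ℝ => ‖z₁.eval ((t : ℝ) : ℂ)‖) atTop atTop := by
    refine Polynomial.tendsto_norm_atTop z₁ (Polynomial.natDegree_pos_iff_degree_pos.mp h₁) ?_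
    simpa [Complex.norm_real] using tendsto_abs_atTop_atTop
  have hR : Tendsto (fun t : ℝ => ‖a * z₁.eval ((t : ℝ) : ℂ) + b‖) atTop atTop := by
    have h1 : Tendsto (fun t : ℝ => ‖a‖ * ‖z₁.eval ((t : ℝ) : ℂ)‖ - ‖b‖) atTop atTop :=
      tendsto_atTop_add_const_right _ (-‖b‖)
        (hz₁.const_mul_atTop (norm_pos_iff.mpr ha)) |>.congr (by intro t; ring_nf)
    refine tendsto_atTop_mono ?_ h1
    intro t
    calc ‖a‖ * ‖z₁.eval ((t : ℝ) : ℂ)‖ - ‖b‖ = ‖a * z₁.eval ((t : ℝ) : ℂ)‖ - ‖b‖ := by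
          rw [norm_mul]
      _ ≤ ‖a * z₁.eval ((t : ℝ) : ℂ) + b‖ := by
          have : ‖a * z₁.eval ((t : ℝ) : ℂ)‖ ≤ ‖a * z₁.eval ((t : ℝ) : ℂ) + b‖ + ‖b‖ := by
            simpa using norm_sub_le (a * z₁.eval ((t : ℝ) : ℂ) + b) b
          linarith
  -- Eventually the hypothesis applies
  have hev : ∀ᶠ t : ℝ in atTop, γ * t + δ ≠ 0 := by
    filter_upwards [eventually_ne_atTop (-δ / γ)] with t ht
    intro hc
    apply ht
    field_simp
    linarith
  have hLnorm : Tendsto (fun t : ℝ => ‖z₂.eval ((((α * t + β) / (γ * t + δ) : ℝ)) : ℂ)‖)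
      atTop (𝓝 ‖z₂.eval ((α / γ : ℝ) : ℂ)‖) := hL.norm
  have hLat : Tendsto (fun t : ℝ => ‖z₂.eval ((((α * t + β) / (γ * t + δ) : ℝ)) : ℂ)‖)
      atTop atTop := by
    refine hR.congr' ?_
    filter_upwards [hev] with t ht
    rw [h t ht]
  exact not_tendsto_atTop_of_tendsto_nhds hLnorm hLat
end

section
/- Let x, y : ℝ → ℝ be rational functions parametrizing a curve, with x' and y' not both identically zero. If the Wronskian x'(t)·y''(t) - x''(t)·y'(t) is identically zero, then the image of t ↦ (x(t), y(t)) is contained in a line. -/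
open Polynomial Set

private lemma exists_bound (r : Polynomial ℝ) (hr : r ≠ 0) :
    ∃ M : ℝ, ∀ t, M < t → r.eval t ≠ 0 := by
  obtain ⟨M, hM⟩ := r.exists_max_root hr
  exact ⟨M, fun t ht h => absurd (hM t h) (not_le.2 ht)⟩

private lemma poly_eq_zero_of_ray (N : Polynomial ℝ) (M : ℝ)
    (h : ∀ t, M < t → N.eval t = 0) : N = 0 :=
  N.eq_zero_of_infinite_isRoot ((Set.Ioi_infinite M).mono fun t ht => h t ht)

private lemma hasDerivAt_ratio (p q : Polynomial ℝ) (t : ℝ) (hq : q.eval t ≠ 0) :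
    HasDerivAt (fun s => p.eval s / q.eval s)
      ((p.derivative * q - p * q.derivative).eval t / q.eval t ^ 2) t := by
  simpa using (p.hasDerivAt t).fun_div (q.hasDerivAt t) hq

private lemma deriv_deriv_ratio (p q : Polynomial ℝ) (t : ℝ) (hq : q.eval t ≠ 0) :
    deriv (deriv (fun s => p.eval s / q.eval s)) t =
      ((p.derivative * q - p * q.derivative).derivative * q ^ 2 -
        (p.derivative * q - p * q.derivative) * (q ^ 2).derivative).eval t / q.eval t ^ 4 := by
  have hopen : IsOpen {s : ℝ | q.eval s ≠ 0} :=
    isOpen_compl_singleton.preimage q.continuous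
  have hev : deriv (fun s => p.eval s / q.eval s) =ᶠ[nhds t]
      fun s => (p.derivative * q - p * q.derivative).eval s / (q ^ 2).eval s := by
    filter_upwards [hopen.mem_nhds hq] with s hs
    rw [(hasDerivAt_ratio p q s hs).deriv]
    simp [eval_pow]
  rw [hev.deriv_eq,
    (hasDerivAt_ratio (p.derivative * q - p * q.derivative) (q ^ 2) t
      (by simpa [eval_pow] using pow_ne_zero 2 hq)).deriv]
  simp [eval_pow]
  ring

private lemma const_on_Ioi {f : ℝ → ℝ} {M : ℝ}
    (h : ∀ t, M < t → HasDerivAt f 0 t) :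
    ∀ a, M < a → ∀ b, M < b → f a = f b := by
  have key : ∀ a, M < a → ∀ b, a ≤ b → f b = f a := by
    intro a ha b hab
    exact constant_of_has_deriv_right_zero
      (fun s hs => (h s (lt_of_lt_of_le ha hs.1)).continuousAt.continuousWithinAt)
      (fun s hs => (h s (lt_of_lt_of_le ha hs.1)).hasDerivWithinAt) b ⟨hab, le_refl b⟩
  intro a ha b hb
  rcases le_total a b with hab | hab
  · exact (key a ha b hab).symm
  · exact key b hb a hab

private lemma const_of_num_eq (p q : Polynomial ℝ) (hq : q ≠ 0)
    (h : p.derivative * q = p * q.derivative) : ∃ c : ℝ, p = Polynomial.C c * q := by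
  obtain ⟨M, hM⟩ := exists_bound q hq
  have hd : ∀ t, M < t → HasDerivAt (fun s => p.eval s / q.eval s) 0 t := by
    intro t ht
    have h0 := hasDerivAt_ratio p q t (hM t ht)
    rwa [show p.derivative * q - p * q.derivative = 0 by rw [h]; ring,
      eval_zero, zero_div] at h0
  refine ⟨p.eval (M + 1) / q.eval (M + 1), ?_⟩
  set c := p.eval (M + 1) / q.eval (M + 1) with hc
  have heq : ∀ t, M < t → p.eval t = c * q.eval t := by
    intro t ht
    have h1 := const_on_Ioi hd t ht (M + 1) (by linarith)
    rw [div_eq_iff (hM t ht)] at h1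
    linarith [h1]
  have h2 : p - Polynomial.C c * q = 0 :=
    poly_eq_zero_of_ray _ M (fun t ht => by simp [heq t ht])
  rw [← sub_eq_zero]
  exact h2

/-- If `x, y` are rational functions with `x', y'` not both
identically zero and the Wronskian `x' y'' - x'' y'` identically zero, then the
image of `t ↦ (x(t), y(t))` is contained in a line. -/
theorem line_of_vanishing_wronskian
    (p₁ q₁ p₂ q₂ : Polynomial ℝ) (hq₁ : q₁ ≠ 0) (hq₂ : q₂ ≠ 0)
    (x y : ℝ → ℝ)
    (hx : x = fun t => p₁.eval t / q₁.eval t)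
    (hy : y = fun t => p₂.eval t / q₂.eval t)
    (hnz : ∃ t : ℝ, q₁.eval t ≠ 0 ∧ q₂.eval t ≠ 0 ∧ (deriv x t ≠ 0 ∨ deriv y t ≠ 0))
    (hw : ∀ t : ℝ, q₁.eval t ≠ 0 → q₂.eval t ≠ 0 →
      deriv x t * deriv (deriv y) t - deriv (deriv x) t * deriv y t = 0) :
    ∃ A B C : ℝ, (A, B) ≠ (0, 0) ∧
      ∀ t : ℝ, q₁.eval t ≠ 0 → q₂.eval t ≠ 0 → A * x t + B * y t = C := by
  classical
  by_cases hu : p₁.derivative * q₁ - p₁ * q₁.derivative = 0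
  · -- x is constant
    obtain ⟨c, hc⟩ := const_of_num_eq p₁ q₁ hq₁ (sub_eq_zero.mp hu)
    refine ⟨1, 0, c, by simp, fun t h1 h2 => ?_⟩
    have het := congrArg (Polynomial.eval t) hc
    simp only [eval_mul, eval_C] at het
    rw [hx]
    simp only [one_mul, zero_mul, add_zero]
    rw [het, mul_div_assoc, div_self h1, mul_one]
  · -- main case : numerator of x' is a nonzero polynomial
    set u := p₁.derivative * q₁ - p₁ * q₁.derivative with hu_def
    set v := p₂.derivative * q₂ - p₂ * q₂.derivative with hv_def
    set A2 := u.derivative * q₁ ^ 2 - u * (q₁ ^ 2).derivative with hA2_def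
    set B2 := v.derivative * q₂ ^ 2 - v * (q₂ ^ 2).derivative with hB2_def
    obtain ⟨M₀, hM₀⟩ := exists_bound (q₁ * q₂) (mul_ne_zero hq₁ hq₂)
    have hN : u * B2 * q₁ ^ 2 - A2 * v * q₂ ^ 2 = 0 := by
      apply poly_eq_zero_of_ray _ M₀
      intro t ht
      have h12 := hM₀ t ht
      rw [eval_mul] at h12
      have h1 : q₁.eval t ≠ 0 := fun h => h12 (by rw [h, zero_mul])
      have h2 : q₂.eval t ≠ 0 := fun h => h12 (by rw [h, mul_zero])
      have hw' := hw t h1 h2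
      rw [hx, hy, (hasDerivAt_ratio p₁ q₁ t h1).deriv, (hasDerivAt_ratio p₂ q₂ t h2).deriv,
        deriv_deriv_ratio p₁ q₁ t h1, deriv_deriv_ratio p₂ q₂ t h2] at hw'
      rw [← hu_def, ← hv_def, ← hA2_def, ← hB2_def] at hw'
      have hd1 : q₁.eval t ^ 2 ≠ 0 := pow_ne_zero 2 h1
      have hd2 : q₂.eval t ^ 2 ≠ 0 := pow_ne_zero 2 h2
      have hd3 : q₁.eval t ^ 4 ≠ 0 := pow_ne_zero 4 h1
      have hd4 : q₂.eval t ^ 4 ≠ 0 := pow_ne_zero 4 h2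
      field_simp at hw'
      have hgoal : eval t q₁ ^ 2 * eval t q₂ ^ 2 *
          ((u * B2 * q₁ ^ 2 - A2 * v * q₂ ^ 2).eval t) = 0 := by
        simp only [eval_sub, eval_mul, eval_pow]
        linear_combination (eval t q₁ ^ 2 * eval t q₂ ^ 2) * hw'
      exact (mul_eq_zero.mp hgoal).resolve_left (mul_ne_zero hd1 hd2)
    obtain ⟨M₁, hM₁⟩ := exists_bound (q₁ * q₂ * u) (mul_ne_zero (mul_ne_zero hq₁ hq₂) hu)
    have hg : ∀ t, M₁ < t →
        HasDerivAt (fun s => (v.eval s / (q₂ ^ 2).eval s) / (u.eval s / (q₁ ^ 2).eval s)) 0 t := by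
      intro t ht
      have h12 := hM₁ t ht
      rw [eval_mul, eval_mul] at h12
      have h1 : q₁.eval t ≠ 0 := fun h => h12 (by rw [h]; ring)
      have h2 : q₂.eval t ≠ 0 := fun h => h12 (by rw [h]; ring)
      have hut : u.eval t ≠ 0 := fun h => h12 (by rw [h]; ring)
      have hq1sq : (q₁ ^ 2).eval t ≠ 0 := by simpa [eval_pow] using pow_ne_zero 2 h1
      have hq2sq : (q₂ ^ 2).eval t ≠ 0 := by simpa [eval_pow] using pow_ne_zero 2 h2
      have hX := hasDerivAt_ratio u (q₁ ^ 2) t hq1sq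
      have hY := hasDerivAt_ratio v (q₂ ^ 2) t hq2sq
      have hXne : u.eval t / (q₁ ^ 2).eval t ≠ 0 := div_ne_zero hut hq1sq
      have hdiv : HasDerivAt (fun s => (v.eval s / (q₂ ^ 2).eval s) / (u.eval s / (q₁ ^ 2).eval s)) _ t :=
        hY.fun_div hX hXne
      rw [← hB2_def, ← hA2_def] at hdiv
      convert hdiv using 1
      have hNt : (u * B2 * q₁ ^ 2 - A2 * v * q₂ ^ 2).eval t = 0 := by rw [hN, eval_zero]
      simp only [eval_sub, eval_mul, eval_pow] at hNt
      rw [eq_comm, _root_.div_eq_zero_iff]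
      left
      simp only [eval_pow]
      field_simp
      linear_combination hNt
    set c := (v.eval (M₁ + 1) / (q₂ ^ 2).eval (M₁ + 1)) /
      (u.eval (M₁ + 1) / (q₁ ^ 2).eval (M₁ + 1)) with hc_def
    have hrat : ∀ t, M₁ < t →
        v.eval t * q₁.eval t ^ 2 = c * (u.eval t * q₂.eval t ^ 2) := by
      intro t ht
      have h12 := hM₁ t ht
      rw [eval_mul, eval_mul] at h12
      have h1 : q₁.eval t ≠ 0 := fun h => h12 (by rw [h]; ring)
      have h2 : q₂.eval t ≠ 0 := fun h => h12 (by rw [h]; ring)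
      have hut : u.eval t ≠ 0 := fun h => h12 (by rw [h]; ring)
      have h0 := const_on_Ioi hg t ht (M₁ + 1) (by linarith)
      rw [← hc_def] at h0
      simp only [eval_pow] at h0
      field_simp at h0
      linear_combination h0
    have hvq : v * q₁ ^ 2 = Polynomial.C c * (u * q₂ ^ 2) := by
      rw [← sub_eq_zero]
      apply poly_eq_zero_of_ray _ M₁
      intro t ht
      simp only [eval_sub, eval_mul, eval_pow, eval_C]
      rw [hrat t ht]
      ring
    have hkey : (p₂ * q₁ - Polynomial.C c * (p₁ * q₂)).derivative * (q₁ * q₂) =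
        (p₂ * q₁ - Polynomial.C c * (p₁ * q₂)) * (q₁ * q₂).derivative := by
      rw [← sub_eq_zero]
      have hexp : (p₂ * q₁ - Polynomial.C c * (p₁ * q₂)).derivative * (q₁ * q₂) -
          (p₂ * q₁ - Polynomial.C c * (p₁ * q₂)) * (q₁ * q₂).derivative =
          v * q₁ ^ 2 - Polynomial.C c * (u * q₂ ^ 2) := by
        simp only [hu_def, hv_def, Polynomial.derivative_mul, Polynomial.derivative_sub,
          Polynomial.derivative_C, zero_mul]
        ring
      rw [hexp, hvq, sub_self]
    obtain ⟨e, he⟩ := const_of_num_eq _ _ (mul_ne_zero hq₁ hq₂) hkey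
    refine ⟨-c, 1, e, by simp, fun t h1 h2 => ?_⟩
    have het := congrArg (Polynomial.eval t) he
    simp only [eval_sub, eval_mul, eval_C] at het
    rw [hx, hy]
    field_simp
    linear_combination het
end

section
/- Let x, y : ℝ → ℝ be rational functions such that x'(t)² + y'(t)² is identically equal to a constant c > 0. Then the image of t ↦ (x(t), y(t)) is contained in a line. -/
open Polynomial Filter Topology Set

lemma tendsto_atBot_of_neg {f : ℝ → ℝ} {l : Filter ℝ} (h : Tendsto (fun t => f (-t)) atTop l) :
    Tendsto f atBot l := by
  have h2 := h.comp tendsto_neg_atBot_atTop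
  have : ((fun t => f (-t)) ∘ Neg.neg) = f := by funext t; simp
  rwa [this] at h2

lemma comp_negX_ne_zero {p : ℝ[X]} (hp : p ≠ 0) : p.comp (-X) ≠ 0 := by
  have h1 : ((-X : ℝ[X])).natDegree ≠ 0 := by simp [natDegree_neg]
  have h2 := leadingCoeff_comp (p := p) (q := -X) h1
  intro h0
  rw [h0, leadingCoeff_zero] at h2
  have : p.leadingCoeff ≠ 0 := leadingCoeff_ne_zero.2 hp
  have hlc : (-X : ℝ[X]).leadingCoeff = -1 := by simp [leadingCoeff_neg]
  rw [hlc] at h2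
  have := this
  rcases (mul_eq_zero.1 h2.symm) with h | h
  · exact this h
  · exact (pow_ne_zero _ (by norm_num : (-1:ℝ) ≠ 0)) h

lemma degree_comp_negX (p : ℝ[X]) : (p.comp (-X)).degree = p.degree := by
  by_cases hp : p = 0
  · simp [hp]
  have h1 : (p.comp (-X)) ≠ 0 := comp_negX_ne_zero hp
  rw [degree_eq_natDegree h1, degree_eq_natDegree hp]
  rw [natDegree_comp]
  simp [natDegree_neg]

lemma div_tendsto_zero_atBot (r q : ℝ[X]) (h : r.degree < q.degree) :
    Tendsto (fun x => r.eval x / q.eval x) atBot (𝓝 0) := by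
  apply tendsto_atBot_of_neg
  have hdeg : (r.comp (-X)).degree < (q.comp (-X)).degree := by
    rwa [degree_comp_negX, degree_comp_negX]
  have := div_tendsto_zero_of_degree_lt (r.comp (-X)) (q.comp (-X)) hdeg
  simpa [eval_comp] using this

lemma ext_zero_of_finite {f : ℝ → ℝ} (hf : Continuous f) {S : Set ℝ} (hS : S.Finite)
    (h : ∀ t ∉ S, f t = 0) : ∀ t, f t = 0 := by
  intro t
  have hd : Dense Sᶜ := (hS.countable).dense_compl ℝ
  have hc : IsClosed {s : ℝ | f s = 0} := isClosed_eq hf continuous_const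
  exact (hc.closure_subset_iff.2 (fun s hs => h s hs)) (hd t)

lemma ext_nonneg_of_finite {f : ℝ → ℝ} (hf : Continuous f) {S : Set ℝ} (hS : S.Finite)
    (h : ∀ t ∉ S, 0 ≤ f t) : ∀ t, 0 ≤ f t := by
  intro t
  have hd : Dense Sᶜ := (hS.countable).dense_compl ℝ
  have hc : IsClosed {s : ℝ | 0 ≤ f s} := isClosed_le continuous_const hf
  exact (hc.closure_subset_iff.2 (fun s hs => h s hs)) (hd t)

lemma deg_num_deriv (r q : ℝ[X]) (h : r.degree < q.degree) :
    (r.derivative * q - r * q.derivative).degree < (q * q).degree := by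
  have hq : q ≠ 0 := by rintro rfl; exact absurd h (by simp)
  have hqb : q.degree ≠ ⊥ := fun hb => hq (degree_eq_bot.1 hb)
  have h1 : (r.derivative * q).degree < q.degree + q.degree := by
    rw [degree_mul]
    exact WithBot.add_lt_add_right hqb (lt_of_le_of_lt (degree_derivative_le) h)
  have h2 : (r * q.derivative).degree < q.degree + q.degree := by
    rw [degree_mul]
    exact lt_of_le_of_lt (by gcongr; exact degree_derivative_le) (WithBot.add_lt_add_right hqb h)
  rw [degree_mul]
  exact lt_of_le_of_lt (degree_sub_le _ _) (max_lt h1 h2)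

/-- Per-coordinate structure lemma: a rational function whose derivative is
bounded (off the exceptional set) is `a*t + b +` a proper rational function with
pole-free denominator. -/
lemma reduce_coord (p₁ q₁ q₂ : ℝ[X]) (hq₁ : q₁ ≠ 0) (hq₂ : q₂ ≠ 0)
    (x : ℝ → ℝ) (hx : x = fun t => p₁.eval t / q₁.eval t)
    (B : ℝ) (hbound : ∀ t, q₁.eval t ≠ 0 → q₂.eval t ≠ 0 → |deriv x t| ≤ B) :
    ∃ (a b : ℝ) (r q : ℝ[X]), (∀ t, q.eval t ≠ 0) ∧ r.degree < q.degree ∧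
      ∀ t, q₁.eval t ≠ 0 → x t = a * t + b + r.eval t / q.eval t := by
  classical
  set S : Set ℝ := {t | (q₁ * q₂).IsRoot t} with hSdef
  have hS : S.Finite := finite_setOf_isRoot (mul_ne_zero hq₁ hq₂)
  have hSmem : ∀ t ∉ S, q₁.eval t ≠ 0 ∧ q₂.eval t ≠ 0 := by
    intro t ht
    have h0 : (q₁*q₂).eval t ≠ 0 := ht
    rw [eval_mul] at h0
    exact ⟨left_ne_zero_of_mul h0, right_ne_zero_of_mul h0⟩
  set g : ℝ[X] := GCDMonoid.gcd p₁ q₁ with hgdef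
  have hg : g ≠ 0 := gcd_ne_zero_of_right hq₁
  set p : ℝ[X] := p₁ / g with hpdef
  set q : ℝ[X] := q₁ / g with hqdef
  have hq : q ≠ 0 := right_div_gcd_ne_zero hq₁
  have hco : IsCoprime p q := isCoprime_div_gcd_div_gcd hq₁
  have hq₁eq : g * q = q₁ := EuclideanDomain.mul_div_cancel' hg (gcd_dvd_right _ _)
  have hp₁eq : g * p = p₁ := EuclideanDomain.mul_div_cancel' hg (gcd_dvd_left _ _)
  have hqne : ∀ t, q₁.eval t ≠ 0 → q.eval t ≠ 0 := by
    intro t ht hq0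
    apply ht; rw [← hq₁eq, eval_mul, hq0, mul_zero]
  have hgne : ∀ t, q₁.eval t ≠ 0 → g.eval t ≠ 0 := by
    intro t ht hg0
    apply ht; rw [← hq₁eq, eval_mul, hg0, zero_mul]
  have hxval : ∀ t, q₁.eval t ≠ 0 → x t = p.eval t / q.eval t := by
    intro t ht
    rw [hx]
    simp only
    rw [← hp₁eq, ← hq₁eq, eval_mul, eval_mul, mul_div_mul_left _ _ (hgne t ht)]
  set f : ℝ → ℝ := fun t => p.eval t / q.eval t with hfdef
  have hfx : ∀ t ∉ S, x t = f t := fun t ht => hxval t (hSmem t ht).1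
  have hderiv_eq : ∀ t ∉ S, deriv f t = deriv x t := by
    intro t ht
    have hop : IsOpen Sᶜ := hS.isClosed.isOpen_compl
    have hev : f =ᶠ[𝓝 t] x := by
      filter_upwards [hop.mem_nhds ht] with s hs
      exact (hfx s hs).symm
    exact hev.deriv_eq
  have hB0 : 0 ≤ B := by
    obtain ⟨t, ht⟩ : ∃ t, t ∉ S := (Set.Finite.infinite_compl hS).nonempty
    exact le_trans (abs_nonneg _) (hbound t (hSmem t ht).1 (hSmem t ht).2)
  have hfderiv_bound : ∀ t ∉ S, ∀ (d : ℝ), HasDerivAt f d t → |d| ≤ B := by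
    intro t ht d hd
    rw [← hd.deriv, hderiv_eq t ht]
    exact hbound t (hSmem t ht).1 (hSmem t ht).2
  -- q has no real roots
  have hqroot : ∀ t, q.eval t ≠ 0 := by
    intro β hβ
    have hpβ : p.eval β ≠ 0 := by
      obtain ⟨u, v, huv⟩ := hco
      intro hp0
      have h0 := congrArg (eval β) huv
      simp [hp0, hβ] at h0
    have hScompl : Sᶜ ∈ 𝓝[>] β := by
      have h1 : (S \ {β})ᶜ ∈ 𝓝 β := by
        apply IsOpen.mem_nhds ((hS.subset (diff_subset)).isClosed.isOpen_compl)
        simp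
      have h2 : (S \ {β})ᶜ ∩ Ioi β ∈ 𝓝[>] β :=
        inter_mem (nhdsWithin_le_nhds h1) self_mem_nhdsWithin
      filter_upwards [h2] with s hs hsS
      exact hs.1 ⟨hsS, ne_of_gt hs.2⟩
    obtain ⟨b, hbβ, hIb⟩ := mem_nhdsGT_iff_exists_Ioo_subset.1 hScompl
    have hbβ' : β < b := hbβ
    have hdiff : ∀ s ∈ Ioo β b, DifferentiableAt ℝ f s := by
      intro s hs
      exact ((p.hasDerivAt s).div (q.hasDerivAt s) (hqne s (hSmem s (hIb hs)).1)).differentiableAt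
    have hbd : ∀ s ∈ Ioo β b, ‖deriv f s‖ ≤ B := by
      intro s hs
      have hd := (p.hasDerivAt s).div (q.hasDerivAt s) (hqne s (hSmem s (hIb hs)).1)
      rw [Real.norm_eq_abs, (show HasDerivAt f _ s from hd).deriv]
      exact hfderiv_bound s (hIb hs) _ hd
    set m : ℝ := (β + b) / 2 with hmdef
    have hm : m ∈ Ioo β b := ⟨by simp only [hmdef]; linarith, by simp only [hmdef]; linarith⟩
    have hlip : ∀ s ∈ Ioo β b, |f s| ≤ |f m| + B * (b - β) := by
      intro s hs
      have hmvt := Convex.norm_image_sub_le_of_norm_deriv_le hdiff hbd (convex_Ioo β b) hm hs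
      rw [Real.norm_eq_abs, Real.norm_eq_abs] at hmvt
      have h2 : |s - m| ≤ b - β := by
        rw [abs_le, hmdef]
        constructor <;> linarith [hs.1, hs.2]
      have h3 := mul_le_mul_of_nonneg_left h2 hB0
      have h4 := abs_sub_abs_le_abs_sub (f s) (f m)
      linarith
    have hblow : Tendsto (fun s => |f s|) (𝓝[>] β) atTop := by
      have hp_t : Tendsto (fun s => |p.eval s|) (𝓝[>] β) (𝓝 |p.eval β|) :=
        ((p.continuous.tendsto β).abs).mono_left nhdsWithin_le_nhds
      have hq_t : Tendsto (fun s => |q.eval s|) (𝓝[>] β) (𝓝[>] 0) := by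
        apply tendsto_nhdsWithin_iff.2
        constructor
        · have h5 := (q.continuous.tendsto β).abs
          rw [hβ, abs_zero] at h5
          exact h5.mono_left nhdsWithin_le_nhds
        · filter_upwards [hScompl] with s hs
          exact abs_pos.2 (hqne s (hSmem s hs).1)
      have hinv : Tendsto (fun s => |q.eval s|⁻¹) (𝓝[>] β) atTop :=
        tendsto_inv_nhdsGT_zero.comp hq_t
      have hmul : Tendsto (fun s => |p.eval s| * |q.eval s|⁻¹) (𝓝[>] β) atTop :=
        Tendsto.pos_mul_atTop (abs_pos.2 hpβ) hp_t hinv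
      refine hmul.congr (fun s => ?_)
      rw [abs_div, div_eq_mul_inv]
    have hev : ∀ᶠ s in 𝓝[>] β, |f m| + B * (b - β) < |f s| :=
      hblow.eventually_gt_atTop _
    have hIoo : ∀ᶠ s in 𝓝[>] β, s ∈ Ioo β b :=
      Ioo_mem_nhdsGT_of_mem ⟨le_refl β, hbβ'⟩
    obtain ⟨s, hs1, hs2⟩ := (hev.and hIoo).exists
    exact absurd (hlip s hs2) (not_le.2 hs1)
  -- linear growth at infinity gives the degree bound
  obtain ⟨T, hT⟩ := hS.bddAbove
  set T₁ : ℝ := T + 1 with hT₁def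
  have hT₁ : ∀ s ∈ S, s < T₁ := fun s hs => lt_of_le_of_lt (hT hs) (by simp [hT₁def])
  have hgrow : ∀ t ≥ T₁, |f t| ≤ |f T₁| + B * (t - T₁) := by
    intro t ht
    have hsub : Ioi T ⊆ Sᶜ := fun s hs hsS => absurd (hT hsS) (not_le.2 hs)
    have hdiff : ∀ s ∈ Ioi T, DifferentiableAt ℝ f s := fun s _ =>
      ((p.hasDerivAt s).div (q.hasDerivAt s) (hqroot s)).differentiableAt
    have hbd : ∀ s ∈ Ioi T, ‖deriv f s‖ ≤ B := by
      intro s hs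
      have hd := (p.hasDerivAt s).div (q.hasDerivAt s) (hqroot s)
      rw [Real.norm_eq_abs, (show HasDerivAt f _ s from hd).deriv]
      exact hfderiv_bound s (hsub hs) _ hd
    have hm1 : T₁ ∈ Ioi T := by simp [hT₁def]
    have hm2 : t ∈ Ioi T := by simp only [mem_Ioi]; simp only [hT₁def] at ht; linarith
    have hmvt := Convex.norm_image_sub_le_of_norm_deriv_le hdiff hbd (convex_Ioi T) hm1 hm2
    rw [Real.norm_eq_abs, Real.norm_eq_abs, abs_of_nonneg (by linarith : (0:ℝ) ≤ t - T₁)] at hmvt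
    have h4 := abs_sub_abs_le_abs_sub (f t) (f T₁)
    linarith
  have hdeg : p.degree < (q * X^2).degree := by
    have hqX : q * X^2 ≠ 0 := mul_ne_zero hq (pow_ne_zero 2 X_ne_zero)
    rw [← div_tendsto_zero_iff_degree_lt _ _ hqX]
    set num : ℝ[X] := C (|f T₁| - B * T₁) + C B * X with hnum
    have hnum_deg : num.degree < (X^2 : ℝ[X]).degree := by
      rw [degree_X_pow]
      apply lt_of_le_of_lt (degree_add_le _ _)
      apply max_lt (lt_of_le_of_lt (degree_C_le) (by norm_num))
      apply lt_of_le_of_lt (degree_mul_le _ _)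
      apply lt_of_le_of_lt (add_le_add degree_C_le (le_refl _))
      rw [degree_X]; norm_num
    have hnum_t : Tendsto (fun t => num.eval t / (X^2 : ℝ[X]).eval t) atTop (𝓝 0) :=
      div_tendsto_zero_of_degree_lt _ _ hnum_deg
    apply squeeze_zero_norm' _ hnum_t
    filter_upwards [eventually_ge_atTop T₁, eventually_gt_atTop (0:ℝ)] with t ht ht0
    have hqt : q.eval t ≠ 0 := hqroot t
    have heq : p.eval t / (q*X^2).eval t = f t / t^2 := by
      rw [eval_mul, eval_pow, eval_X]
      rw [hfdef]
      simp only
      rw [div_div]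
    rw [Real.norm_eq_abs, heq, abs_div, abs_of_pos (by positivity : (0:ℝ) < t^2),
      eval_add, eval_mul, eval_C, eval_C, eval_X, eval_pow, eval_X]
    have hg2 := hgrow t ht
    have hre : |f T₁| - B * T₁ + B * t = |f T₁| + B * (t - T₁) := by ring
    rw [hre]
    gcongr
  -- polynomial division with remainder
  have hdeg' : p.degree < q.degree + 2 := by
    rwa [degree_mul, degree_X_pow] at hdeg
  set k : ℝ := (q.leadingCoeff)⁻¹ with hkdef
  have hk0 : k ≠ 0 := inv_ne_zero (leadingCoeff_ne_zero.2 hq)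
  set qm : ℝ[X] := q * C k with hqmdef
  set pm : ℝ[X] := p * C k with hpmdef
  have hmon : qm.Monic := monic_mul_leadingCoeff_inv hq
  have hqm0 : qm ≠ 0 := hmon.ne_zero
  have hqmroot : ∀ t, qm.eval t ≠ 0 := by
    intro t h0
    rw [hqmdef, eval_mul, eval_C] at h0
    rcases mul_eq_zero.1 h0 with h | h
    · exact hqroot t h
    · exact hk0 h
  have hqmdeg : qm.degree = q.degree := degree_mul_leadingCoeff_inv q hq
  have hpmdeg : pm.degree = p.degree := degree_mul_C hk0
  have hdeg2 : pm.degree < qm.degree + 2 := by rw [hpmdeg, hqmdeg]; exact hdeg'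
  set u : ℝ[X] := pm /ₘ qm with hudef
  set r : ℝ[X] := pm %ₘ qm with hrdef
  have heqn : r + qm * u = pm := modByMonic_add_div pm qm
  have hrdeg : r.degree < qm.degree := degree_modByMonic_lt pm hmon
  have hqmb : qm.degree ≠ ⊥ := fun hb => hqm0 (degree_eq_bot.1 hb)
  have hudeg : u.degree ≤ 1 := by
    by_cases hu0 : u = 0
    · rw [hu0, degree_zero]; exact bot_le
    have h5 : (qm * u).degree = qm.degree + u.degree := degree_mul
    have h6 : r.degree < (qm * u).degree := by
      rw [h5]
      exact lt_of_lt_of_le hrdeg (le_add_of_nonneg_right (zero_le_degree_iff.2 hu0))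
    have h7 : pm.degree = (qm * u).degree := by
      rw [← heqn]; exact degree_add_eq_right_of_degree_lt h6
    have h8 : qm.degree + u.degree < qm.degree + 2 := by
      rw [← h5, ← h7]; exact hdeg2
    have h9 : u.degree < 2 := (WithBot.add_lt_add_iff_left hqmb).1 h8
    rw [degree_eq_natDegree hu0] at h9 ⊢
    have : u.natDegree < 2 := by exact_mod_cast h9
    exact_mod_cast Nat.lt_succ_iff.1 this
  have hueq : u = C (u.coeff 1) * X + C (u.coeff 0) := eq_X_add_C_of_degree_le_one hudeg
  refine ⟨u.coeff 1, u.coeff 0, r, qm, hqmroot, hrdeg, fun t ht => ?_⟩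
  have hqmt : qm.eval t ≠ 0 := hqmroot t
  have e1 : x t = pm.eval t / qm.eval t := by
    rw [hxval t ht, hpmdef, hqmdef, eval_mul, eval_mul, eval_C,
      mul_div_mul_right _ _ hk0]
  have e2 : pm.eval t = r.eval t + qm.eval t * u.eval t := by
    conv_lhs => rw [← heqn]
    rw [eval_add, eval_mul]
  have e3 : u.eval t = u.coeff 1 * t + u.coeff 0 := by
    conv_lhs => rw [hueq]
    simp
  rw [e1, e2, add_div, mul_comm (qm.eval t) (u.eval t), mul_div_assoc,
    div_self hqmt, mul_one, e3]
  ring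


/-- If `x, y` are rational functions with `x'² + y'²` identically
equal to a constant `c > 0`, then the image of `t ↦ (x(t), y(t))` is contained
in a line. -/
theorem line_of_constant_speed
    (p₁ q₁ p₂ q₂ : Polynomial ℝ) (hq₁ : q₁ ≠ 0) (hq₂ : q₂ ≠ 0)
    (x y : ℝ → ℝ)
    (hx : x = fun t => p₁.eval t / q₁.eval t)
    (hy : y = fun t => p₂.eval t / q₂.eval t)
    (c : ℝ) (hc : 0 < c)
    (hspeed : ∀ t : ℝ, q₁.eval t ≠ 0 → q₂.eval t ≠ 0 →
      (deriv x t)^2 + (deriv y t)^2 = c) :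
    ∃ A B C : ℝ, (A, B) ≠ (0, 0) ∧
      ∀ t : ℝ, q₁.eval t ≠ 0 → q₂.eval t ≠ 0 → A * x t + B * y t = C := by
  classical
  have hbx : ∀ t, q₁.eval t ≠ 0 → q₂.eval t ≠ 0 → |deriv x t| ≤ Real.sqrt c := by
    intro t h1 h2
    have h := hspeed t h1 h2
    have hle : (deriv x t)^2 ≤ c := by nlinarith [sq_nonneg (deriv y t)]
    calc |deriv x t| = Real.sqrt ((deriv x t)^2) := (Real.sqrt_sq_eq_abs _).symm
      _ ≤ Real.sqrt c := Real.sqrt_le_sqrt hle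
  have hby : ∀ t, q₂.eval t ≠ 0 → q₁.eval t ≠ 0 → |deriv y t| ≤ Real.sqrt c := by
    intro t h2 h1
    have h := hspeed t h1 h2
    have hle : (deriv y t)^2 ≤ c := by nlinarith [sq_nonneg (deriv x t)]
    calc |deriv y t| = Real.sqrt ((deriv y t)^2) := (Real.sqrt_sq_eq_abs _).symm
      _ ≤ Real.sqrt c := Real.sqrt_le_sqrt hle
  obtain ⟨a₁, b₁, r₁, Q₁, hQ₁, hr₁, hfx⟩ := reduce_coord p₁ q₁ q₂ hq₁ hq₂ x hx _ hbx
  obtain ⟨a₂, b₂, r₂, Q₂, hQ₂, hr₂, hfy⟩ := reduce_coord p₂ q₂ q₁ hq₂ hq₁ y hy _ hby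
  set fx : ℝ → ℝ := fun t => a₁ * t + b₁ + r₁.eval t / Q₁.eval t with hfxdef
  set fy : ℝ → ℝ := fun t => a₂ * t + b₂ + r₂.eval t / Q₂.eval t with hfydef
  set Dx : ℝ → ℝ := fun t => a₁ + ((r₁.derivative * Q₁ - r₁ * Q₁.derivative).eval t) / (Q₁.eval t)^2 with hDxdef
  set Dy : ℝ → ℝ := fun t => a₂ + ((r₂.derivative * Q₂ - r₂ * Q₂.derivative).eval t) / (Q₂.eval t)^2 with hDydef
  have hDx : ∀ t, HasDerivAt fx (Dx t) t := by
    intro t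
    have h1 : HasDerivAt (fun s : ℝ => a₁ * s + b₁) a₁ t := by
      simpa using ((hasDerivAt_id t).const_mul a₁).add_const b₁
    have h2 := (r₁.hasDerivAt t).div (Q₁.hasDerivAt t) (hQ₁ t)
    have h3 := h1.add h2
    refine h3.congr_deriv ?_
    rw [hDxdef]
    simp only [eval_sub, eval_mul]
  have hDy : ∀ t, HasDerivAt fy (Dy t) t := by
    intro t
    have h1 : HasDerivAt (fun s : ℝ => a₂ * s + b₂) a₂ t := by
      simpa using ((hasDerivAt_id t).const_mul a₂).add_const b₂
    have h2 := (r₂.hasDerivAt t).div (Q₂.hasDerivAt t) (hQ₂ t)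
    have h3 := h1.add h2
    refine h3.congr_deriv ?_
    rw [hDydef]
    simp only [eval_sub, eval_mul]
  have hDxc : Continuous Dx := by
    rw [hDxdef]
    exact continuous_const.add (((r₁.derivative * Q₁ - r₁ * Q₁.derivative).continuous).div
      ((Q₁.continuous).pow 2) (fun t => pow_ne_zero 2 (hQ₁ t)))
  have hDyc : Continuous Dy := by
    rw [hDydef]
    exact continuous_const.add (((r₂.derivative * Q₂ - r₂ * Q₂.derivative).continuous).div
      ((Q₂.continuous).pow 2) (fun t => pow_ne_zero 2 (hQ₂ t)))
  set S : Set ℝ := {t | (q₁ * q₂).IsRoot t} with hSdef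
  have hS : S.Finite := finite_setOf_isRoot (mul_ne_zero hq₁ hq₂)
  have hSmem : ∀ t ∉ S, q₁.eval t ≠ 0 ∧ q₂.eval t ≠ 0 := by
    intro t ht
    have h0 : (q₁*q₂).eval t ≠ 0 := ht
    rw [eval_mul] at h0
    exact ⟨left_ne_zero_of_mul h0, right_ne_zero_of_mul h0⟩
  have hderivx : ∀ t ∉ S, deriv x t = Dx t := by
    intro t ht
    have hop : IsOpen Sᶜ := hS.isClosed.isOpen_compl
    have hev : x =ᶠ[𝓝 t] fx := by
      filter_upwards [hop.mem_nhds ht] with s hs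
      exact hfx s (hSmem s hs).1
    rw [hev.deriv_eq, (hDx t).deriv]
  have hderivy : ∀ t ∉ S, deriv y t = Dy t := by
    intro t ht
    have hop : IsOpen Sᶜ := hS.isClosed.isOpen_compl
    have hev : y =ᶠ[𝓝 t] fy := by
      filter_upwards [hop.mem_nhds ht] with s hs
      exact hfy s (hSmem s hs).2
    rw [hev.deriv_eq, (hDy t).deriv]
  have hsum : ∀ t ∉ S, Dx t^2 + Dy t^2 = c := by
    intro t ht
    rw [← hderivx t ht, ← hderivy t ht]
    exact hspeed t (hSmem t ht).1 (hSmem t ht).2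
  -- the slopes of the asymptotes
  have hDx_top : Tendsto Dx atTop (𝓝 a₁) := by
    have h0 : Tendsto (fun t => ((r₁.derivative * Q₁ - r₁ * Q₁.derivative).eval t) / ((Q₁*Q₁).eval t)) atTop (𝓝 0) :=
      div_tendsto_zero_of_degree_lt _ _ (deg_num_deriv r₁ Q₁ hr₁)
    have h1 : Tendsto (fun t => a₁ + ((r₁.derivative * Q₁ - r₁ * Q₁.derivative).eval t) / ((Q₁*Q₁).eval t)) atTop (𝓝 (a₁ + 0)) :=
      tendsto_const_nhds.add h0
    rw [add_zero] at h1
    refine h1.congr (fun t => ?_)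
    rw [hDxdef]
    simp only [eval_mul]
    rw [sq]
  have hDy_top : Tendsto Dy atTop (𝓝 a₂) := by
    have h0 : Tendsto (fun t => ((r₂.derivative * Q₂ - r₂ * Q₂.derivative).eval t) / ((Q₂*Q₂).eval t)) atTop (𝓝 0) :=
      div_tendsto_zero_of_degree_lt _ _ (deg_num_deriv r₂ Q₂ hr₂)
    have h1 : Tendsto (fun t => a₂ + ((r₂.derivative * Q₂ - r₂ * Q₂.derivative).eval t) / ((Q₂*Q₂).eval t)) atTop (𝓝 (a₂ + 0)) :=
      tendsto_const_nhds.add h0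
    rw [add_zero] at h1
    refine h1.congr (fun t => ?_)
    rw [hDydef]
    simp only [eval_mul]
    rw [sq]
  have hSev : ∀ᶠ t in (atTop : Filter ℝ), t ∉ S := by
    obtain ⟨T, hT⟩ := hS.bddAbove
    filter_upwards [eventually_gt_atTop T] with t ht hts
    exact absurd (hT hts) (not_le.2 ht)
  have ha : a₁^2 + a₂^2 = c := by
    have h1 : Tendsto (fun t => Dx t^2 + Dy t^2) atTop (𝓝 (a₁^2 + a₂^2)) :=
      (hDx_top.pow 2).add (hDy_top.pow 2)
    have h2 : (fun t => Dx t^2 + Dy t^2) =ᶠ[atTop] (fun _ => c) := by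
      filter_upwards [hSev] with t ht
      exact hsum t ht
    exact tendsto_nhds_unique (h1.congr' h2) tendsto_const_nhds
  -- the nonnegative "defect" function
  set G : ℝ → ℝ := fun t => c - (a₁ * Dx t + a₂ * Dy t) with hGdef
  have hGc : Continuous G :=
    continuous_const.sub ((continuous_const.mul hDxc).add (continuous_const.mul hDyc))
  have hG0 : ∀ t, 0 ≤ G t := by
    apply ext_nonneg_of_finite hGc hS
    intro t ht
    have h2 := hsum t ht
    show 0 ≤ c - (a₁ * Dx t + a₂ * Dy t)
    nlinarith [sq_nonneg (a₁ - Dx t), sq_nonneg (a₂ - Dy t)]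
  set H : ℝ → ℝ := fun t => c * t - (a₁ * fx t + a₂ * fy t) with hHdef
  have hH : ∀ t, HasDerivAt H (G t) t := by
    intro t
    have h1 : HasDerivAt (fun s : ℝ => c * s) c t := by
      simpa using (hasDerivAt_id t).const_mul c
    have h2 := ((hDx t).const_mul a₁).add ((hDy t).const_mul a₂)
    exact h1.sub h2
  have hHmono : Monotone H :=
    monotone_of_deriv_nonneg (fun t => (hH t).differentiableAt)
      (fun t => by rw [(hH t).deriv]; exact hG0 t)
  set K : ℝ := -(a₁ * b₁ + a₂ * b₂) with hKdef
  have hHeq : H = fun t => K - (a₁ * (r₁.eval t / Q₁.eval t) + a₂ * (r₂.eval t / Q₂.eval t)) := by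
    funext t
    rw [hHdef, hKdef, hfxdef, hfydef]
    simp only
    have : c = a₁^2 + a₂^2 := ha.symm
    rw [this]; ring
  have hR₁top : Tendsto (fun t => r₁.eval t / Q₁.eval t) atTop (𝓝 0) :=
    div_tendsto_zero_of_degree_lt _ _ hr₁
  have hR₂top : Tendsto (fun t => r₂.eval t / Q₂.eval t) atTop (𝓝 0) :=
    div_tendsto_zero_of_degree_lt _ _ hr₂
  have hR₁bot : Tendsto (fun t => r₁.eval t / Q₁.eval t) atBot (𝓝 0) :=
    div_tendsto_zero_atBot _ _ hr₁
  have hR₂bot : Tendsto (fun t => r₂.eval t / Q₂.eval t) atBot (𝓝 0) :=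
    div_tendsto_zero_atBot _ _ hr₂
  have hHtop : Tendsto H atTop (𝓝 K) := by
    rw [hHeq]
    have h1 : Tendsto (fun t : ℝ => K - (a₁ * (r₁.eval t / Q₁.eval t) + a₂ * (r₂.eval t / Q₂.eval t)))
        atTop (𝓝 (K - (a₁ * 0 + a₂ * 0))) :=
      (tendsto_const_nhds (α := ℝ) (x := K)).sub ((hR₁top.const_mul a₁).add (hR₂top.const_mul a₂))
    simpa using h1
  have hHbot : Tendsto H atBot (𝓝 K) := by
    rw [hHeq]
    have h1 : Tendsto (fun t : ℝ => K - (a₁ * (r₁.eval t / Q₁.eval t) + a₂ * (r₂.eval t / Q₂.eval t)))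
        atBot (𝓝 (K - (a₁ * 0 + a₂ * 0))) :=
      (tendsto_const_nhds (α := ℝ) (x := K)).sub ((hR₁bot.const_mul a₁).add (hR₂bot.const_mul a₂))
    simpa using h1
  have hHconst : ∀ t, H t = K := by
    intro t
    have hle : H t ≤ K := by
      apply ge_of_tendsto hHtop
      filter_upwards [eventually_ge_atTop t] with s hs
      exact hHmono hs
    have hge : K ≤ H t := by
      apply le_of_tendsto hHbot
      filter_upwards [eventually_le_atBot t] with s hs
      exact hHmono hs
    linarith
  have hGzero : ∀ t, G t = 0 := by
    intro t
    have h1 : H = fun _ => K := funext hHconst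
    have h2 : deriv H t = G t := (hH t).deriv
    rw [h1, deriv_const] at h2
    exact h2.symm
  have hsum_all : ∀ t, Dx t^2 + Dy t^2 = c := by
    have h := ext_zero_of_finite (f := fun t => Dx t^2 + Dy t^2 - c)
      (((hDxc.pow 2).add (hDyc.pow 2)).sub continuous_const) hS
      (fun t ht => by show Dx t^2 + Dy t^2 - c = 0; rw [hsum t ht]; ring)
    intro t
    have h2 : Dx t^2 + Dy t^2 - c = 0 := h t
    linarith
  have hperp : ∀ t, a₂ * Dx t - a₁ * Dy t = 0 := by
    intro t
    have h1 : c - (a₁ * Dx t + a₂ * Dy t) = 0 := hGzero t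
    have h2 := hsum_all t
    have h3 : (a₂ * Dx t - a₁ * Dy t)^2 = 0 := by
      linear_combination (Dx t^2 + Dy t^2) * ha + c * h2 + (a₁ * Dx t + a₂ * Dy t + c) * h1
    exact pow_eq_zero_iff (by norm_num) |>.1 h3
  set F : ℝ → ℝ := fun t => a₂ * fx t - a₁ * fy t with hFdef
  have hF : ∀ t, HasDerivAt F 0 t := by
    intro t
    have h1 := ((hDx t).const_mul a₂).sub ((hDy t).const_mul a₁)
    rw [hperp t] at h1
    exact h1
  have hFconst : ∀ s t : ℝ, F s = F t :=
    is_const_of_deriv_eq_zero (fun t => (hF t).differentiableAt) (fun t => (hF t).deriv)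
  refine ⟨a₂, -a₁, F 0, ?_, ?_⟩
  · intro h
    rw [Prod.mk.injEq] at h
    have ha₂ : a₂ = 0 := h.1
    have ha₁ : a₁ = 0 := by have := h.2; linarith
    rw [ha₁, ha₂] at ha
    norm_num at ha
    linarith
  · intro t h1 h2
    have e1 : x t = fx t := hfx t h1
    have e2 : y t = fy t := hfy t h2
    rw [e1, e2]
    have hval : a₂ * fx t - a₁ * fy t = F 0 := hFconst t 0
    linarith [hval]
end

section
/- An irreducible plane algebraic curve that is not a line admits no nontrivial translation symmetry: if C = {(x,y) : F(x,y) = 0} with F irreducible of degree ≥ 2 and C + v = C for some vector v, then v = 0. -/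
open MvPolynomial

/-- A unit in `ℝ[x]` (one variable, as MvPolynomial) is a constant. -/
lemma isUnit_eq_C1 (r : MvPolynomial (Fin 1) ℝ) (h : IsUnit r) :
    ∃ s : ℝ, r = MvPolynomial.C s := by
  set e := MvPolynomial.finSuccEquiv ℝ 0 with he
  have h1 : IsUnit (e r) := h.map e
  obtain ⟨r0, hr0⟩ := Polynomial.natDegree_eq_zero.mp
    (Polynomial.natDegree_eq_zero_of_isUnit h1)
  obtain ⟨s, rfl⟩ := MvPolynomial.C_surjective (Fin 0) r0
  refine ⟨s, ?_⟩
  have h3 := RingHom.congr_fun (MvPolynomial.finSuccEquiv_comp_C_eq_C (R := ℝ) 0) s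
  calc r = e.symm (e r) := (e.symm_apply_apply r).symm
    _ = e.symm (Polynomial.C (MvPolynomial.C s)) := by rw [← hr0]
    _ = MvPolynomial.C s := by simpa using h3

/-- A unit in `ℝ[x,y]` is a constant. -/
lemma isUnit_eq_C2 (q : MvPolynomial (Fin 2) ℝ) (h : IsUnit q) :
    ∃ s : ℝ, q = MvPolynomial.C s := by
  set e := MvPolynomial.finSuccEquiv ℝ 1 with he
  have h1 : IsUnit (e q) := h.map e
  obtain ⟨r, hr⟩ := Polynomial.natDegree_eq_zero.mp
    (Polynomial.natDegree_eq_zero_of_isUnit h1)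
  have hru : IsUnit r := Polynomial.isUnit_C.mp (hr ▸ h1)
  obtain ⟨s, rfl⟩ := isUnit_eq_C1 r hru
  refine ⟨s, ?_⟩
  have h3 := RingHom.congr_fun (MvPolynomial.finSuccEquiv_comp_C_eq_C (R := ℝ) 1) s
  calc q = e.symm (e q) := (e.symm_apply_apply q).symm
    _ = e.symm (Polynomial.C (MvPolynomial.C s)) := by rw [← hr]
    _ = MvPolynomial.C s := by simpa using h3

/-- If `G(a*y+b, y) = 0` for all real `y`, then the linear polynomial
`X 0 - (C a * X 1 + C b)` divides `G`. -/
lemma line_dvd (G : MvPolynomial (Fin 2) ℝ) (a b : ℝ)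
    (h : ∀ y : ℝ, MvPolynomial.eval ![a * y + b, y] G = 0) :
    (X 0 - (C a * X 1 + C b)) ∣ G := by
  set e := MvPolynomial.finSuccEquiv ℝ 1 with he
  set c : MvPolynomial (Fin 1) ℝ := C a * X 0 + C b with hc
  have key : Polynomial.eval c (e G) = 0 := by
    apply MvPolynomial.funext
    intro s
    rw [map_zero, ← Polynomial.eval₂_at_apply, ← Polynomial.eval_map]
    have h2 : (MvPolynomial.eval s) c = a * s 0 + b := by simp [hc]
    have h4 : (Fin.cons (a * s 0 + b) s : Fin 2 → ℝ) = ![a * s 0 + b, s 0] := by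
      funext i
      refine Fin.cases ?_ (fun j => ?_) i
      · rfl
      · fin_cases j; rfl
    rw [h2, ← MvPolynomial.eval_eq_eval_mv_eval', h4]
    exact h (s 0)
  have hdvd : (Polynomial.X - Polynomial.C c) ∣ e G := by
    rw [← Polynomial.modByMonic_eq_zero_iff_dvd (Polynomial.monic_X_sub_C c),
      Polynomial.modByMonic_X_sub_C_eq_C_eval, key, map_zero]
  have hℓ : e (X 0 - (C a * X 1 + C b)) = Polynomial.X - Polynomial.C c := by
    have h0 : e (X 0) = Polynomial.X := MvPolynomial.finSuccEquiv_X_zero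
    have h1 : e (X 1) = Polynomial.C (X 0) := by
      have hone : (1 : Fin 2) = Fin.succ 0 := rfl
      rw [hone]; exact MvPolynomial.finSuccEquiv_X_succ
    have hCr : ∀ r : ℝ, e (C r) = Polynomial.C (C r) := by
      intro r
      have h3 := RingHom.congr_fun (MvPolynomial.finSuccEquiv_comp_C_eq_C (R := ℝ) 1) r
      have : (MvPolynomial.finSuccEquiv ℝ 1).symm (Polynomial.C (MvPolynomial.C r))
          = MvPolynomial.C r := by simpa using h3
      rw [he, ← this, AlgEquiv.apply_symm_apply]
    rw [map_sub, map_add, map_mul, h0, h1, hCr a, hCr b, hc, map_add, map_mul]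
  obtain ⟨q, hq⟩ := hdvd
  refine ⟨e.symm q, ?_⟩
  apply e.injective
  rw [map_mul, hℓ, AlgEquiv.apply_symm_apply]
  exact hq

/-- Finishing lemma: an irreducible polynomial of total degree ≥ 2 is not
divisible by a polynomial of total degree ≤ 1 that vanishes somewhere. -/
lemma no_low_factor (F ℓ : MvPolynomial (Fin 2) ℝ) (hirr : Irreducible F)
    (hdeg : 2 ≤ F.totalDegree) (hdvd : ℓ ∣ F)
    (pt : Fin 2 → ℝ) (hpt : MvPolynomial.eval pt ℓ = 0)
    (hℓdeg : ℓ.totalDegree ≤ 1) : False := by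
  obtain ⟨q, hq⟩ := hdvd
  rcases hirr.isUnit_or_isUnit hq with hu | hu
  · have : IsUnit (MvPolynomial.eval pt ℓ) := hu.map (MvPolynomial.eval pt)
    rw [hpt] at this
    exact this.ne_zero rfl
  · obtain ⟨s, rfl⟩ := isUnit_eq_C2 q hu
    have h1 : F.totalDegree ≤ ℓ.totalDegree + (MvPolynomial.C s :
        MvPolynomial (Fin 2) ℝ).totalDegree := by
      rw [hq]; exact MvPolynomial.totalDegree_mul ℓ _
    rw [MvPolynomial.totalDegree_C] at h1
    omega

/-- An irreducible plane algebraic curve of degree `≥ 2` (with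
infinitely many real points) admits no nontrivial translation symmetry. -/
theorem no_nontrivial_translation_symmetry
    (F : MvPolynomial (Fin 2) ℝ) (hirr : Irreducible F) (hdeg : 2 ≤ F.totalDegree)
    (C : Set (ℝ × ℝ)) (hC : C = {p : ℝ × ℝ | MvPolynomial.eval ![p.1, p.2] F = 0})
    (hinf : C.Infinite) (v : ℝ × ℝ) (hv : (fun p => p + v) '' C = C) :
    v = 0 := by
  by_contra hvne
  obtain ⟨p, hp⟩ := hinf.nonempty
  have hstep : ∀ q ∈ C, q + v ∈ C := by
    intro q hq
    rw [← hv]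
    exact Set.mem_image_of_mem _ hq
  have hn : ∀ n : ℕ, (p.1 + v.1 * n, p.2 + v.2 * n) ∈ C := by
    intro n
    induction n with
    | zero => simpa using hp
    | succ n ih =>
        have h := hstep _ ih
        have heq : ((p.1 + v.1 * n, p.2 + v.2 * n) : ℝ × ℝ) + v
            = (p.1 + v.1 * (n + 1 : ℕ), p.2 + v.2 * (n + 1 : ℕ)) := by
          rw [Prod.ext_iff]
          constructor <;> · simp; ring
        rwa [heq] at h
  set s : Fin 2 → Polynomial ℝ :=
    ![Polynomial.C p.1 + Polynomial.C v.1 * Polynomial.X,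
      Polynomial.C p.2 + Polynomial.C v.2 * Polynomial.X] with hs
  set g : Polynomial ℝ := MvPolynomial.aeval s F with hg
  have hgeval : ∀ t : ℝ, Polynomial.eval t g
      = MvPolynomial.eval ![p.1 + v.1 * t, p.2 + v.2 * t] F := by
    intro t
    rw [hg, MvPolynomial.aeval_def, ← Polynomial.coe_evalRingHom,
      MvPolynomial.eval₂_comp_left (Polynomial.evalRingHom t)]
    have h1 : (Polynomial.evalRingHom t).comp (algebraMap ℝ (Polynomial ℝ))
        = RingHom.id ℝ := by ext r; simp
    have h2 : (Polynomial.evalRingHom t) ∘ s = ![p.1 + v.1 * t, p.2 + v.2 * t] := by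
      funext i; fin_cases i <;> simp [hs]
    rw [h1, h2]
    rfl
  have hg0 : g = 0 := by
    apply Polynomial.eq_zero_of_infinite_isRoot
    apply Set.Infinite.mono (s := Set.range ((↑) : ℕ → ℝ))
    · rintro _ ⟨n, rfl⟩
      have h := hn n
      rw [hC] at h
      simp only [Set.mem_setOf_eq] at h
      rw [Set.mem_setOf_eq, Polynomial.IsRoot, hgeval]
      exact h
    · exact Set.infinite_range_of_injective Nat.cast_injective
  have hline : ∀ t : ℝ, MvPolynomial.eval ![p.1 + v.1 * t, p.2 + v.2 * t] F = 0 := by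
    intro t
    rw [← hgeval, hg0, Polynomial.eval_zero]
  rcases eq_or_ne v.2 0 with hv2 | hv2
  · -- v.2 = 0, so v.1 ≠ 0, and F vanishes on the horizontal line y = p.2
    have hv1 : v.1 ≠ 0 := fun hv1 => hvne (Prod.ext hv1 hv2)
    have hhor : ∀ x : ℝ, MvPolynomial.eval ![x, p.2] F = 0 := by
      intro x
      have h := hline ((x - p.1) / v.1)
      rw [hv2] at h
      have hvec : ![x, p.2] = ![p.1 + v.1 * ((x - p.1) / v.1), p.2 + 0 * ((x - p.1) / v.1)] := by
        funext i; fin_cases i <;> simp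
        field_simp; ring
      rw [hvec]
      exact h
    set σ := Equiv.swap (0 : Fin 2) 1 with hσ
    set G := MvPolynomial.rename σ F with hG
    have hsw : ∀ y : ℝ, MvPolynomial.eval ![0 * y + p.2, y] G = 0 := by
      intro y
      rw [hG, MvPolynomial.eval_rename]
      have hcomp : (![0 * y + p.2, y] ∘ σ) = ![y, p.2] := by
        funext i; fin_cases i <;> simp [hσ, Equiv.swap_apply_def]
      rw [hcomp]
      exact hhor y
    obtain ⟨q, hqe⟩ := line_dvd G 0 p.2 hsw
    have hdvdF : MvPolynomial.rename σ (X 0 - (MvPolynomial.C 0 * X 1 + MvPolynomial.C p.2)) ∣ F := by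
      refine ⟨MvPolynomial.rename σ q, ?_⟩
      have hFF : MvPolynomial.rename (⇑σ) G = F := by
        rw [hG, MvPolynomial.rename_rename]
        have hid : (⇑σ ∘ ⇑σ) = id := by funext i; simp [hσ]
        rw [hid, MvPolynomial.rename_id, AlgHom.id_apply]
      rw [← hFF, hqe, map_mul]
    refine no_low_factor F _ hirr hdeg hdvdF ![0, p.2] ?_ ?_
    · rw [MvPolynomial.eval_rename]
      have hcomp : (![(0 : ℝ), p.2] ∘ σ) = ![p.2, 0] := by
        funext i; fin_cases i <;> simp [hσ, Equiv.swap_apply_def]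
      rw [hcomp]
      simp
    · refine le_trans (MvPolynomial.totalDegree_rename_le _ _) ?_
      apply le_trans (MvPolynomial.totalDegree_sub _ _)
      apply max_le (by simp [MvPolynomial.totalDegree_X])
      apply le_trans (MvPolynomial.totalDegree_add _ _)
      apply max_le
      · apply le_trans (MvPolynomial.totalDegree_mul _ _)
        simp [MvPolynomial.totalDegree_X, MvPolynomial.totalDegree_C]
      · simp [MvPolynomial.totalDegree_C]
  · -- v.2 ≠ 0 : F vanishes on the line x = a y + b
    set a := v.1 / v.2 with ha
    set b := p.1 - a * p.2 with hb
    have hlin : ∀ y : ℝ, MvPolynomial.eval ![a * y + b, y] F = 0 := by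
      intro y
      have h := hline ((y - p.2) / v.2)
      have hvec : ![a * y + b, y] = ![p.1 + v.1 * ((y - p.2) / v.2), p.2 + v.2 * ((y - p.2) / v.2)] := by
        funext i; fin_cases i <;> simp [ha, hb]
        · field_simp; ring
        · field_simp; ring
      rw [hvec]
      exact h
    refine no_low_factor F _ hirr hdeg (line_dvd F a b hlin) ![b, 0] ?_ ?_
    · simp
    · apply le_trans (MvPolynomial.totalDegree_sub _ _)
      apply max_le (by simp [MvPolynomial.totalDegree_X])
      apply le_trans (MvPolynomial.totalDegree_add _ _)
      apply max_le
      · apply le_trans (MvPolynomial.totalDegree_mul _ _)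
        simp [MvPolynomial.totalDegree_X, MvPolynomial.totalDegree_C]
      · simp [MvPolynomial.totalDegree_C]
end
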